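/- Every three-point metric space has strict q-negative type for all q in some interval [1, 1+ζ) with ζ > 0; that is, if (X,d) is a metric space with exactly three points, then there exists ζ > 0 such that (X,d) has strict q-negative type for every q ∈ [1, 1+ζ). -/

import Mathlib

open scoped BigOperators

/-- The kernel `d(x,y)^p`, with the convention that it vanishes on the diagonal
(this matters only when `p = 0`). -/
noncomputable def negKer {X : Type*} [MetricSpace X] (p : ℝ) (x y : X) : ℝ :=
  @ite ℝ (x = y) (Classical.dec _) 0 (dist x y ^ p)

/-- `(X,d)` has `p`-negative type: for all `k ≥ 2`, pairwise distinct points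
`x₁,…,x_k` and reals `η₁,…,η_k` summing to zero,
`∑_{i,j} d(xᵢ,xⱼ)^p ηᵢ ηⱼ ≤ 0`. -/
def HasNegType (X : Type*) [MetricSpace X] (p : ℝ) : Prop :=
  ∀ (k : ℕ), 2 ≤ k → ∀ (x : Fin k → X), Function.Injective x →
    ∀ (η : Fin k → ℝ), (∑ i, η i) = 0 →
      (∑ i, ∑ j, negKer p (x i) (x j) * η i * η j) ≤ 0

/-- `(X,d)` has strict `p`-negative type: `p`-negative type, with strict
inequality whenever `η ≠ 0`. -/
def HasStrictNegType (X : Type*) [MetricSpace X] (p : ℝ) : Prop :=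
  HasNegType X p ∧
  ∀ (k : ℕ), 2 ≤ k → ∀ (x : Fin k → X), Function.Injective x →
    ∀ (η : Fin k → ℝ), (∑ i, η i) = 0 → η ≠ 0 →
      (∑ i, ∑ j, negKer p (x i) (x j) * η i * η j) < 0

/-!
Put the three points in order and let `A`, `B`, `C` be the `q`-th powers of the side lengths
opposite them. On weights `u + v + w = 0`, eliminating `w` turns the quadratic form into
`-2 (B u² - (C - A - B) u v + A v²)`, which is negative definite exactly when
`(C - A - B)² < 4 A B`. For `q = 1`, with sides `a`, `b`, `c` and triangle defects
`x = a + b - c`, `y = b + c - a`, `z = c + a - b`, one has `4 a b - (c - a - b)² = x y + y z + z x`,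
which is positive for a nondegenerate triangle; the strict inequality persists for `q` near `1`
since `q ↦ d ^ q` is continuous.
-/

open Function Topology

lemma sq_sub_sub_lt_four_mul {a b c : ℝ} (ha : 0 < a) (hb : 0 < b) (hc : 0 < c)
    (hab : c ≤ a + b) (hbc : a ≤ b + c) (hca : b ≤ a + c) : (c - a - b) ^ 2 < 4 * a * b := by
  nlinarith [mul_nonneg (sub_nonneg.2 hab) (sub_nonneg.2 hbc),
    mul_nonneg (sub_nonneg.2 hab) (sub_nonneg.2 hca), mul_pos ha hb, mul_pos hc ha, mul_pos hc hb]

lemma quadratic_form_pos_of_sq_lt {A B D u v : ℝ} (hB : 0 < B) (hD : D ^ 2 < 4 * A * B)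
    (huv : u ≠ 0 ∨ v ≠ 0) : 0 < B * u ^ 2 - D * u * v + A * v ^ 2 := by
  have completed_square : 4 * B * (B * u ^ 2 - D * u * v + A * v ^ 2)
      = (2 * B * u - D * v) ^ 2 + (4 * A * B - D ^ 2) * v ^ 2 := by ring
  have : 0 < (2 * B * u - D * v) ^ 2 + (4 * A * B - D ^ 2) * v ^ 2 := by
    rcases eq_or_ne v 0 with rfl | hv
    · have hu : u ≠ 0 := huv.resolve_right (not_not.2 rfl)
      norm_num
      positivity
    · exact add_pos_of_nonneg_of_pos (sq_nonneg _) (mul_pos (sub_pos.2 hD) (by positivity))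
  exact pos_of_mul_pos_right (completed_square ▸ this) (by positivity)

lemma three_point_form_neg {A B C u v w : ℝ} (hB : 0 < B) (hdisc : (C - A - B) ^ 2 < 4 * A * B)
    (hsum : u + v + w = 0) (huv : u ≠ 0 ∨ v ≠ 0) : C * u * v + B * u * w + A * v * w < 0 := by
  have hw : w = -u - v := by linarith
  calc C * u * v + B * u * w + A * v * w = -(B * u ^ 2 - (C - A - B) * u * v + A * v ^ 2) := by
        rw [hw]; ring
    _ < 0 := neg_neg_of_pos (quadratic_form_pos_of_sq_lt hB hdisc huv)

section Extend

variable {ι X : Type*} [Fintype ι] [Fintype X] {x : ι → X}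

lemma sum_extend_zero (hx : Injective x) (η : ι → ℝ) : ∑ y, extend x η 0 y = ∑ i, η i :=
  (Fintype.sum_of_injective x hx η (extend x η 0) (fun _ hy => extend_apply' _ _ _ hy)
    fun i => (hx.extend_apply η 0 i).symm).symm

lemma sum_sum_extend_mul (hx : Injective x) (η : ι → ℝ) (F : X → X → ℝ) :
    ∑ y, ∑ z, F y z * extend x η 0 y * extend x η 0 z = ∑ i, ∑ j, F (x i) (x j) * η i * η j := by
  have hout : ∀ y ∉ Set.range x, extend x η 0 y = 0 := fun y hy => extend_apply' _ _ _ hy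
  refine (Fintype.sum_of_injective x hx _ _ (fun y hy => ?_) fun i => ?_).symm
  · simp [hout y hy]
  · refine Fintype.sum_of_injective x hx _ _ (fun z hz => by simp [hout z hz]) fun j => ?_
    simp [hx.extend_apply]

end Extend

section NegType

variable {X : Type*} [MetricSpace X]

lemma negKer_self (p : ℝ) (x : X) : negKer p x x = 0 := if_pos rfl

lemma negKer_of_ne (p : ℝ) {x y : X} (h : x ≠ y) : negKer p x y = dist x y ^ p := if_neg h

theorem hasStrictNegType_of_forall_sum_neg [Fintype X] {p : ℝ}
    (h : ∀ η : X → ℝ, ∑ y, η y = 0 → η ≠ 0 → ∑ y, ∑ z, negKer p y z * η y * η z < 0) :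
    HasStrictNegType X p := by
  have strict : ∀ (k : ℕ) (x : Fin k → X), Injective x → ∀ η : Fin k → ℝ, ∑ i, η i = 0 →
      η ≠ 0 → ∑ i, ∑ j, negKer p (x i) (x j) * η i * η j < 0 := by
    intro k x hx η hsum hη
    rw [← sum_sum_extend_mul hx]
    refine h _ (by rw [sum_extend_zero hx, hsum]) fun h0 => hη (funext fun i => ?_)
    rw [← hx.extend_apply η 0 i, h0, Pi.zero_apply, Pi.zero_apply]
  refine ⟨fun k _ x hx η hsum => ?_, fun k _ => strict k⟩
  rcases eq_or_ne η 0 with rfl | hη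
  · simp
  · exact (strict k x hx η hsum hη).le

theorem hasStrictNegType_of_equiv_fin_three [Fintype X] (e : Fin 3 ≃ X) {p : ℝ}
    (h : (dist (e 0) (e 1) ^ p - dist (e 1) (e 2) ^ p - dist (e 0) (e 2) ^ p) ^ 2
      < 4 * dist (e 1) (e 2) ^ p * dist (e 0) (e 2) ^ p) :
    HasStrictNegType X p := by
  have sum_three (F : X → ℝ) : ∑ y, F y = F (e 0) + F (e 1) + F (e 2) := by
    rw [← e.sum_comp, Fin.sum_univ_three]
  have ker (i j : Fin 3) (hij : i ≠ j) : negKer p (e i) (e j) = dist (e i) (e j) ^ p :=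
    negKer_of_ne p (e.injective.ne hij)
  refine hasStrictNegType_of_forall_sum_neg fun η hsum hη => ?_
  rw [sum_three] at hsum
  have huv : η (e 0) ≠ 0 ∨ η (e 1) ≠ 0 := by
    by_contra! h01
    obtain ⟨h0, h1⟩ := h01
    have h2 : η (e 2) = 0 := by linarith
    refine hη (funext fun y => ?_)
    obtain ⟨i, rfl⟩ := e.surjective y
    fin_cases i <;> assumption
  have hB : 0 < dist (e 0) (e 2) ^ p :=
    Real.rpow_pos_of_pos (dist_pos.2 (e.injective.ne (by decide))) p
  have hneg := three_point_form_neg hB h hsum huv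
  simp only [sum_three, negKer_self, ker 0 1 (by decide), ker 0 2 (by decide),
    ker 1 0 (by decide), ker 1 2 (by decide), ker 2 0 (by decide), ker 2 1 (by decide),
    dist_comm (e 1) (e 0), dist_comm (e 2) (e 0), dist_comm (e 2) (e 1)]
  linarith

end NegType

/-- Every three-point metric space has strict `q`-negative type for all `q` in
some interval `[1, 1+ζ)` with `ζ > 0`. -/
theorem threePoint_strictNegType_interval {X : Type*} [MetricSpace X] [Fintype X]
    (hcard : Fintype.card X = 3) :
    ∃ ζ : ℝ, 0 < ζ ∧ ∀ q : ℝ, 1 ≤ q → q < 1 + ζ → HasStrictNegType X q := by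
  obtain e : Fin 3 ≃ X := (Fintype.equivFinOfCardEq hcard).symm
  have hd (i j : Fin 3) (hij : i ≠ j) : 0 < dist (e i) (e j) := dist_pos.2 (e.injective.ne hij)
  have hdisc : ∀ᶠ q in 𝓝 (1 : ℝ),
      (dist (e 0) (e 1) ^ q - dist (e 1) (e 2) ^ q - dist (e 0) (e 2) ^ q) ^ 2
        < 4 * dist (e 1) (e 2) ^ q * dist (e 0) (e 2) ^ q := by
    apply ContinuousAt.eventually_lt
    · exact Continuous.continuousAt (by fun_prop (disch := exact (hd _ _ (by decide)).ne'))
    · exact Continuous.continuousAt (by fun_prop (disch := exact (hd _ _ (by decide)).ne'))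
    simp only [Real.rpow_one]
    exact sq_sub_sub_lt_four_mul (hd 1 2 (by decide)) (hd 0 2 (by decide)) (hd 0 1 (by decide))
      (by linarith [dist_triangle_right (e 0) (e 1) (e 2)])
      (by linarith [dist_triangle_left (e 1) (e 2) (e 0)])
      (by linarith [dist_triangle (e 0) (e 1) (e 2)])
  obtain ⟨ζ, hζ, hball⟩ := Metric.eventually_nhds_iff.1 hdisc
  refine ⟨ζ, hζ, fun q hq1 hq2 => hasStrictNegType_of_equiv_fin_three e (hball ?_)⟩
  rw [Real.dist_eq, abs_lt]
  constructor <;> linarith
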